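/- Let C ⊆ ℝ² be homogenization-convex and let ψ, φ : ℝ² → ℝ be linear forms such that φ(x₀) > 0 for some x₀ ∈ C. Then ψ(x) ≥ 0 for all x ∈ C with φ(x) ≥ 0 if and only if there exists ξ ≥ 0 such that ψ(x) − ξφ(x) ≥ 0 for all x ∈ C. -/

import Mathlib

/-!
The closure `K` of the homogeneous hull of `C` is a convex set on which `ψ ≥ 0` wherever `φ > 0`
(by homogeneity and continuity). Moving from a point of `K` with `φ = 0` slightly towards `x₀`
extends this to `φ ≥ 0`. Then for `w, y ∈ K` with `φ w < 0 < φ y` the convex combination of `w`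
and `y` on which `φ` vanishes gives `ψ w / φ w ≤ ψ y / φ y`, so any `ξ` between the supremum of
the left-hand ratios and the infimum of the right-hand ones works; we take the infimum.
-/

/-- The homogeneous hull of a set: `{τ • x : τ ≥ 0, x ∈ C}`. -/
def homHull (C : Set (EuclideanSpace ℝ (Fin 2))) : Set (EuclideanSpace ℝ (Fin 2)) :=
  {y | ∃ τ : ℝ, 0 ≤ τ ∧ ∃ x ∈ C, y = τ • x}

open Set

lemma nonneg_of_forall_pos_nonneg_add_mul {a b : ℝ} (h : ∀ t : ℝ, 0 < t → t ≤ 1 → 0 ≤ a + t * b) :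
    0 ≤ a := by
  have hlim : Filter.Tendsto (fun t : ℝ => a + t * b) (nhdsWithin 0 (Ioi 0)) (nhds a) := by
    have hcont : Continuous (fun t : ℝ => a + t * b) := by fun_prop
    simpa using (hcont.tendsto 0).mono_left nhdsWithin_le_nhds
  refine ge_of_tendsto hlim ?_
  filter_upwards [Ioo_mem_nhdsGT (zero_lt_one' ℝ)] with t ht
  exact h t ht.1 ht.2.le

section ConvexSet

variable {E : Type*} [AddCommGroup E] [Module ℝ E] {K : Set E} {ψ φ : E →ₗ[ℝ] ℝ}

lemma Convex.forall_nonneg_of_forall_pos (hK : Convex ℝ K) {x₀ : E} (hx₀ : x₀ ∈ K)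
    (hφx₀ : 0 < φ x₀) (hpos : ∀ y ∈ K, 0 < φ y → 0 ≤ ψ y) : ∀ y ∈ K, 0 ≤ φ y → 0 ≤ ψ y := by
  intro y hy hφy
  rcases hφy.lt_or_eq with hφy | hφy
  · exact hpos y hy hφy
  refine nonneg_of_forall_pos_nonneg_add_mul (b := ψ x₀ - ψ y) fun t ht0 ht1 => ?_
  have hz : (1 - t) • y + t • x₀ ∈ K := hK hy hx₀ (by linarith) ht0.le (by ring)
  have hφz : 0 < φ ((1 - t) • y + t • x₀) := by
    simpa [← hφy] using mul_pos ht0 hφx₀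
  convert hpos _ hz hφz using 1
  simp only [map_add, map_smul, smul_eq_mul]
  ring

lemma Convex.mul_le_mul_of_apply_neg_of_apply_pos (hK : Convex ℝ K)
    (hnn : ∀ y ∈ K, 0 ≤ φ y → 0 ≤ ψ y) {w y : E} (hw : w ∈ K) (hy : y ∈ K)
    (hφw : φ w < 0) (hφy : 0 < φ y) : φ w * ψ y ≤ φ y * ψ w := by
  have hd : 0 < φ y - φ w := by linarith
  -- the point of the segment `[w, y]` on which `φ` vanishes
  set z := (φ y / (φ y - φ w)) • w + (-φ w / (φ y - φ w)) • y
  have hz : z ∈ K := hK hw hy (by positivity) (div_nonneg (by linarith) hd.le) (by field_simp; ring)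
  have hφz : φ z = 0 := by
    simp only [z, map_add, map_smul, smul_eq_mul]
    field_simp
    ring
  have hψz : ψ z = (φ y * ψ w - φ w * ψ y) / (φ y - φ w) := by
    simp only [z, map_add, map_smul, smul_eq_mul]
    field_simp
    ring
  have := hnn z hz hφz.ge
  rwa [hψz, le_div_iff₀ hd, zero_mul, sub_nonneg] at this

lemma Convex.exists_nonneg_mul_le (hK : Convex ℝ K) {x₀ : E} (hx₀ : x₀ ∈ K) (hφx₀ : 0 < φ x₀)
    (hpos : ∀ y ∈ K, 0 < φ y → 0 ≤ ψ y) : ∃ ξ : ℝ, 0 ≤ ξ ∧ ∀ y ∈ K, ξ * φ y ≤ ψ y := by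
  have hnn := hK.forall_nonneg_of_forall_pos hx₀ hφx₀ hpos
  set T := (fun y => ψ y / φ y) '' {y ∈ K | 0 < φ y}
  have hT : T.Nonempty := ⟨_, mem_image_of_mem _ ⟨hx₀, hφx₀⟩⟩
  have hT0 : ∀ r ∈ T, 0 ≤ r := by
    rintro _ ⟨y, ⟨hy, hφy⟩, rfl⟩
    exact div_nonneg (hpos y hy hφy) hφy.le
  have hbdd : BddBelow T := ⟨0, hT0⟩
  refine ⟨sInf T, le_csInf hT hT0, fun y hy => ?_⟩
  rcases lt_trichotomy (φ y) 0 with hφy | hφy | hφy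
  · have hle : ψ y / φ y ≤ sInf T := by
      refine le_csInf hT ?_
      rintro _ ⟨x, ⟨hx, hφx⟩, rfl⟩
      rw [div_le_iff_of_neg hφy, div_mul_eq_mul_div, div_le_iff₀ hφx]
      linarith [hK.mul_le_mul_of_apply_neg_of_apply_pos hnn hy hx hφy hφx]
    rwa [div_le_iff_of_neg hφy] at hle
  · simpa [hφy] using hnn y hy hφy.ge
  · rw [← le_div_iff₀ hφy]
    exact csInf_le hbdd (mem_image_of_mem _ ⟨hy, hφy⟩)

end ConvexSet

lemma forall_mem_closure_of_forall_pos {E : Type*} [TopologicalSpace E] {S : Set E}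
    {ψ φ : E → ℝ} (hψ : Continuous ψ) (hφ : Continuous φ) (h : ∀ u ∈ S, 0 < φ u → 0 ≤ ψ u) :
    ∀ y ∈ closure S, 0 < φ y → 0 ≤ ψ y := by
  intro y hy hφy
  have hy' : y ∈ closure ({u | 0 < φ u} ∩ S) :=
    (isOpen_lt continuous_const hφ).inter_closure ⟨hφy, hy⟩
  exact closure_minimal (fun u hu => h u hu.2 hu.1) (isClosed_le continuous_const hψ) hy'

lemma subset_homHull (C : Set (EuclideanSpace ℝ (Fin 2))) : C ⊆ homHull C :=
  fun x hx => ⟨1, zero_le_one, x, hx, (one_smul ℝ x).symm⟩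

lemma forall_mem_homHull_of_forall_pos {C : Set (EuclideanSpace ℝ (Fin 2))}
    {ψ φ : EuclideanSpace ℝ (Fin 2) →ₗ[ℝ] ℝ} (h : ∀ x ∈ C, 0 < φ x → 0 ≤ ψ x) :
    ∀ u ∈ homHull C, 0 < φ u → 0 ≤ ψ u := by
  rintro _ ⟨τ, hτ, x, hx, rfl⟩ hφ
  rw [map_smul, smul_eq_mul] at hφ ⊢
  exact mul_nonneg hτ (h x hx (pos_of_mul_pos_right hφ hτ))

/-- Two-dimensional S-Lemma for linear forms on a homogenization-convex set. -/
theorem linear_S_lemma_2D (C : Set (EuclideanSpace ℝ (Fin 2)))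
    (hC : Convex ℝ (closure (homHull C)))
    (ψ φ : EuclideanSpace ℝ (Fin 2) →ₗ[ℝ] ℝ)
    (x₀ : EuclideanSpace ℝ (Fin 2)) (hx₀ : x₀ ∈ C) (hφx₀ : 0 < φ x₀) :
    (∀ x ∈ C, 0 ≤ φ x → 0 ≤ ψ x) ↔
      ∃ ξ : ℝ, 0 ≤ ξ ∧ ∀ x ∈ C, 0 ≤ ψ x - ξ * φ x := by
  constructor
  · intro h
    have hCK : C ⊆ closure (homHull C) := (subset_homHull C).trans subset_closure
    have hpos : ∀ y ∈ closure (homHull C), 0 < φ y → 0 ≤ ψ y :=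
      forall_mem_closure_of_forall_pos ψ.continuous_of_finiteDimensional
        φ.continuous_of_finiteDimensional
        (forall_mem_homHull_of_forall_pos fun x hx hφx => h x hx hφx.le)
    obtain ⟨ξ, hξ, hle⟩ := hC.exists_nonneg_mul_le (hCK hx₀) hφx₀ hpos
    exact ⟨ξ, hξ, fun x hx => sub_nonneg.mpr (hle x (hCK hx))⟩
  · rintro ⟨ξ, hξ, hle⟩ x hx hφx
    nlinarith [hle x hx, mul_nonneg hξ hφx]
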